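/- For every integer M ≥ 1, (2/(M+1))·∑_{k=1}^{M} k·|g(k/(M+1))| = M/π, where g(u) = −(1 − u)·cot(πu) − 1/π for 0 < u < 1. -/

import Mathlib

/-!
With `x = π(1 - u)` one has `g(u) = (x cos x - sin x) / (π sin x)`, and `x cos x ≤ sin x` on
`[0, π]`, so `g ≤ 0` on `(0, 1)` and `|g(u)| = (1 - u) cot(πu) + 1/π`. Writing `N = M + 1`, the
weighted cotangent terms `k (1 - k/N) cot(πk/N) = k (N - k) cot(πk/N) / N` change sign under
`k ↦ N - k`, so they sum to zero, and what is left is `(2/N) ∑ k / π = M / π`.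
-/

open Real Finset

theorem Finset.sum_Icc_eq_zero_of_reflect_eq_neg {G : Type*} [AddCommGroup G] [IsAddTorsionFree G]
    {f : ℕ → G} {n : ℕ} (hf : ∀ k ∈ Icc 1 n, f (n + 1 - k) = -f k) :
    ∑ k ∈ Icc 1 n, f k = 0 := by
  rw [← self_eq_neg, ← sum_neg_distrib]
  refine sum_nbij' (n + 1 - ·) (n + 1 - ·) ?_ ?_ ?_ ?_ fun k hk => by rw [hf k hk, neg_neg]
  all_goals intro k hk; simp only [mem_Icc] at hk ⊢; omega

theorem Finset.sum_Icc_natCast_mul_two {R : Type*} [CommSemiring R] (n : ℕ) :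
    (∑ k ∈ Icc 1 n, (k : R)) * 2 = n * (n + 1) := by
  induction n with
  | zero => simp
  | succ n ih =>
    rw [sum_Icc_succ_top (Nat.le_add_left 1 n), add_mul, ih]
    push_cast
    ring

theorem Real.cot_pi_sub (x : ℝ) : cot (π - x) = -cot x := by
  rw [cot_eq_cos_div_sin, cot_eq_cos_div_sin, cos_pi_sub, sin_pi_sub, neg_div]

theorem Real.mul_cos_le_sin {x : ℝ} (h0 : 0 ≤ x) (h1 : x ≤ π) : x * cos x ≤ sin x := by
  rcases h0.eq_or_lt with rfl | h0
  · simp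
  rcases lt_or_ge x (π / 2) with hx | hx
  · have hcos : 0 < cos x := cos_pos_of_mem_Ioo ⟨by linarith [pi_pos], hx⟩
    have htan := lt_tan h0 hx
    rw [tan_eq_sin_div_cos, lt_div_iff₀ hcos] at htan
    exact htan.le
  · calc x * cos x ≤ 0 := mul_nonpos_of_nonneg_of_nonpos h0.le
          (cos_nonpos_of_pi_div_two_le_of_le hx (by linarith))
      _ ≤ sin x := sin_nonneg_of_nonneg_of_le_pi h0.le h1

noncomputable def g (u : ℝ) : ℝ := -(1 - u) * cot (π * u) - 1 / π

theorem g_nonpos {u : ℝ} (h0 : 0 < u) (h1 : u < 1) : g u ≤ 0 := by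
  set x := π * (1 - u)
  have hx0 : 0 < x := mul_pos pi_pos (by linarith)
  have hxπ : x < π := by nlinarith [pi_pos]
  have hsin : 0 < sin x := sin_pos_of_pos_of_lt_pi hx0 hxπ
  have hcot : cot (π * u) = -cot x := by rw [← cot_pi_sub, show π - x = π * u by ring]
  have hg : g u = (x * cos x - sin x) / (π * sin x) := by
    rw [g, hcot, cot_eq_cos_div_sin]
    field_simp
    ring
  rw [hg]
  exact div_nonpos_of_nonpos_of_nonneg (sub_nonpos.2 (mul_cos_le_sin hx0.le hxπ.le))
    (by positivity)

theorem abs_g {u : ℝ} (h0 : 0 < u) (h1 : u < 1) :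
    |g u| = (1 - u) * cot (π * u) + 1 / π := by
  rw [abs_of_nonpos (g_nonpos h0 h1), g]
  ring

theorem sum_natCast_mul_one_sub_div_mul_cot_eq_zero (M : ℕ) :
    ∑ k ∈ Icc 1 M, (k : ℝ) * ((1 - k / (M + 1)) * cot (π * (k / (M + 1)))) = 0 := by
  refine sum_Icc_eq_zero_of_reflect_eq_neg fun k hk => ?_
  have hkM : k ≤ M + 1 := by simp only [mem_Icc] at hk; omega
  have hangle : π * (((M + 1 - k : ℕ) : ℝ) / (M + 1)) = π - π * (k / (M + 1)) := by
    push_cast [Nat.cast_sub hkM]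
    field_simp
  rw [hangle, cot_pi_sub]
  push_cast [Nat.cast_sub hkM]
  field_simp
  ring

theorem g_weighted_sum_eq_general (M : ℕ) :
    2 / ((M : ℝ) + 1) * ∑ k ∈ Finset.Icc 1 M,
        (k : ℝ) * |(-(1 - (k : ℝ) / (M + 1)) *
            Real.cot (Real.pi * ((k : ℝ) / (M + 1))) - 1 / Real.pi)| =
      (M : ℝ) / Real.pi := by
  have hN : (0 : ℝ) < M + 1 := by positivity
  have habs : ∀ k ∈ Icc 1 M, (k : ℝ) * |g (k / (M + 1))| =
      k * ((1 - k / (M + 1)) * cot (π * (k / (M + 1)))) + k * (1 / π) := by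
    intro k hk
    obtain ⟨hk1, hkM⟩ := mem_Icc.mp hk
    have hk0 : (0 : ℝ) < k := by exact_mod_cast hk1
    have hkN : (k : ℝ) < M + 1 := by exact_mod_cast Nat.lt_succ_of_le hkM
    rw [abs_g (div_pos hk0 hN) ((div_lt_one hN).2 hkN), mul_add]
  change 2 / ((M : ℝ) + 1) * ∑ k ∈ Icc 1 M, (k : ℝ) * |g (k / (M + 1))| = M / π
  rw [sum_congr rfl habs, sum_add_distrib, sum_natCast_mul_one_sub_div_mul_cot_eq_zero,
    zero_add, ← sum_mul]
  have hsum := sum_Icc_natCast_mul_two (R := ℝ) M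
  field_simp
  linear_combination hsum

/-- For every integer `M ≥ 1`: `(2/(M+1)) ∑_{k=1}^{M} k·|g(k/(M+1))| = M/π`, where
`g(u) = -(1-u)cot(πu) - 1/π`. -/
theorem g_weighted_sum_eq (M : ℕ) (hM : 1 ≤ M) :
    2 / ((M : ℝ) + 1) * ∑ k ∈ Finset.Icc 1 M,
        (k : ℝ) * |(-(1 - (k : ℝ) / (M + 1)) *
            Real.cot (Real.pi * ((k : ℝ) / (M + 1))) - 1 / Real.pi)| =
      (M : ℝ) / Real.pi :=
  g_weighted_sum_eq_general M
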